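/- arXiv:1705.06331 — 2 statements merged into one kernel-verified Lean document; each statement's English description precedes it below -/
import Mathlib

section
/- There is no one-dimensional real-analytic submanifold (closed analytic curve) of ℝ² that is a closed subset of ℝ² and contains the set X = {(x, sin(1/(δx - 1/π))) : x ≤ 1/(2δπ)}: any closed subset Γ of ℝ² which is locally the zero set of a real-analytic function with nonvanishing gradient and contains X must fail to exist. Equivalently, any analytic curve containing X cannot be closed in ℝ². -/
/-!
Write `g x = sin (1 / (δ x - 1 / π))` and `x₀ = 1 / (π δ)`. If `Γ` is closed and locally the zero
set of analytic functions, then by the isolated zeros principle the set of parameters near which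
the analytic curve `x ↦ (x, g x)` stays in `Γ` is open and relatively closed in `(-∞, x₀)`; as it
contains `(-∞, 1 / (2 δ π))`, the whole graph of `g` over `(-∞, x₀)` lies in `Γ`. Since `g`
oscillates through every value of `[-1, 1]` as `x → x₀⁻`, the closed set `Γ` then contains the
segment `{x₀} × [-1, 1]` as well as points `(x, 0)` with `x → x₀⁻`. A local defining function `f`
at `(x₀, 0)` vanishes along both of these directions, so `df (x₀, 0) = 0`.
-/

open Filter Topology Set Real

section AnalyticZeroSet

variable {𝕜 E : Type*} [NontriviallyNormedField 𝕜] [NormedAddCommGroup E] [NormedSpace 𝕜 E]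

variable (𝕜) in
def IsLocallyAnalyticZeroSet (Γ : Set E) : Prop :=
  ∀ p ∈ Γ, ∃ (U : Set E) (f : E → 𝕜),
    IsOpen U ∧ p ∈ U ∧ AnalyticOn 𝕜 f U ∧ Γ ∩ U = {q ∈ U | f q = 0}

namespace IsLocallyAnalyticZeroSet

variable {Γ : Set E} {γ : 𝕜 → E}

theorem eventually_mem_of_frequently_mem (hΓ : IsLocallyAnalyticZeroSet 𝕜 Γ)
    (hΓc : IsClosed Γ) {a : 𝕜} (hγ : AnalyticAt 𝕜 γ a) (h : ∃ᶠ t in 𝓝[≠] a, γ t ∈ Γ) :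
    ∀ᶠ t in 𝓝 a, γ t ∈ Γ := by
  have hγa : γ a ∈ Γ :=
    hΓc.mem_of_frequently_of_tendsto h (hγ.continuousAt.tendsto.mono_left nhdsWithin_le_nhds)
  obtain ⟨U, f, hU, haU, hf, hΓU⟩ := hΓ _ hγa
  have hγU : ∀ᶠ t in 𝓝 a, γ t ∈ U := hγ.continuousAt.preimage_mem_nhds (hU.mem_nhds haU)
  have hfγ : AnalyticAt 𝕜 (f ∘ γ) a := (hf.analyticAt (hU.mem_nhds haU)).comp hγ
  have hzero : ∃ᶠ t in 𝓝[≠] a, f (γ t) = 0 := by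
    refine (h.and_eventually (hγU.filter_mono nhdsWithin_le_nhds)).mono ?_
    rintro t ⟨htΓ, htU⟩
    exact (hΓU.subset ⟨htΓ, htU⟩).2
  filter_upwards [hfγ.frequently_zero_iff_eventually_zero.mp hzero, hγU] with t ht htU
  exact (hΓU.symm.subset ⟨htU, ht⟩).1

theorem mapsTo_of_eventually_mem (hΓ : IsLocallyAnalyticZeroSet 𝕜 Γ) (hΓc : IsClosed Γ)
    {V : Set 𝕜} (hV : IsPreconnected V) (hγ : AnalyticOnNhd 𝕜 γ V) {t₀ : 𝕜} (ht₀ : t₀ ∈ V)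
    (h : ∀ᶠ t in 𝓝 t₀, γ t ∈ Γ) : MapsTo γ V Γ := by
  set B := {t | ∀ᶠ s in 𝓝 t, γ s ∈ Γ}
  have hclosure : closure B ∩ V ⊆ B := by
    rintro a ⟨haB, haV⟩
    by_cases ha : a ∈ B
    · exact ha
    refine hΓ.eventually_mem_of_frequently_mem hΓc (hγ a haV) (frequently_nhdsWithin_iff.mpr ?_)
    refine (mem_closure_iff_frequently.mp haB).mono fun t ht => ⟨ht.self_of_nhds, ?_⟩
    rintro rfl
    exact ha ht
  have hVB : V ⊆ B :=
    hV.subset_of_closure_inter_subset isOpen_setOfPred_eventually_nhds ⟨t₀, ht₀, h⟩ hclosure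
  exact fun t ht => (hVB ht).self_of_nhds

end IsLocallyAnalyticZeroSet

end AnalyticZeroSet

section UniqueDiff

variable {𝕜 E F : Type*} [NontriviallyNormedField 𝕜] [NormedAddCommGroup E] [NormedSpace 𝕜 E]
  [NormedAddCommGroup F] [NormedSpace 𝕜 F]

theorem uniqueDiffWithinAt_of_slices {u : Set (E × F)} {x : E} {y : F}
    (hs : UniqueDiffWithinAt 𝕜 {x' | (x', y) ∈ u} x)
    (ht : UniqueDiffWithinAt 𝕜 {y' | (x, y') ∈ u} y) : UniqueDiffWithinAt 𝕜 u (x, y) := by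
  have hsu : {x' | (x', y) ∈ u} ×ˢ {y} ⊆ u := by rintro ⟨x', y'⟩ ⟨hx', rfl⟩; exact hx'
  have htu : {x} ×ˢ {y' | (x, y') ∈ u} ⊆ u := by rintro ⟨x', y'⟩ ⟨rfl, hy'⟩; exact hy'
  rw [uniqueDiffWithinAt_iff] at hs ht ⊢
  refine ⟨?_, closure_mono hsu (by simp [closure_prod_eq, hs.2])⟩
  have hspan : _ ≤ Submodule.span 𝕜 (tangentConeAt 𝕜 u (x, y)) := Submodule.span_mono <|
    union_subset
      ((subset_tangentConeAt_prod_left (subset_closure (mem_singleton y))).trans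
        (tangentConeAt_mono hsu))
      ((subset_tangentConeAt_prod_right (subset_closure (mem_singleton x))).trans
        (tangentConeAt_mono htu))
  rw [LinearMap.span_inl_union_inr, SetLike.le_def] at hspan
  exact (hs.1.prod ht.1).mono hspan

theorem HasFDerivAt.eq_zero_of_forall_eq {f : E → F} {f' : E →L[𝕜] F} {x : E} {s : Set E}
    (hf : HasFDerivAt f f' x) (hs : UniqueDiffWithinAt 𝕜 s x) (hconst : ∀ y ∈ s, f y = f x) :
    f' = 0 :=
  hs.eq hf.hasFDerivWithinAt ((hasFDerivWithinAt_const (f x) x s).congr hconst rfl)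

end UniqueDiff

theorem frequently_sin_inv_eq {y : ℝ} (hy : y ∈ Icc (-1) 1) :
    ∃ᶠ t in 𝓝[<] 0, sin t⁻¹ = y := by
  have hbot : ∃ᶠ s in atBot, sin s = y := by
    refine frequently_atBot.mpr fun a => ?_
    obtain ⟨s, hs, hsin⟩ := sin_periodic.exists_mem_Ico two_pi_pos (arcsin y) (a - 2 * π)
    exact ⟨s, by linarith [hs.2], hsin ▸ sin_arcsin hy.1 hy.2⟩
  exact tendsto_inv_atBot_nhdsLT_zero.frequently (by simpa using hbot)

theorem frequently_sin_one_div_sub_eq {a b y : ℝ} (ha : 0 < a) (hy : y ∈ Icc (-1) 1) :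
    ∃ᶠ x in 𝓝[<] (b / a), sin (1 / (a * x - b)) = y := by
  have htendsto : Tendsto (fun t => (t + b) / a) (𝓝[<] 0) (𝓝[<] (b / a)) := by
    refine tendsto_nhdsWithin_iff.mpr ⟨?_, eventually_mem_nhdsWithin.mono fun t ht => ?_⟩
    · simpa using ((continuous_add_const b).div_const a).continuousAt.tendsto.mono_left
        (nhdsWithin_le_nhds (a := (0 : ℝ)))
    · exact div_lt_div_of_pos_right (by linarith [mem_Iio.mp ht]) ha
  refine htendsto.frequently ((frequently_sin_inv_eq hy).mono fun t ht => ?_)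
  rwa [mul_div_cancel₀ _ ha.ne', add_sub_cancel_right, one_div]

theorem segment_subset_of_graph_sin_subset {a b : ℝ} (ha : 0 < a) {Γ : Set (ℝ × ℝ)}
    (hΓc : IsClosed Γ) (hgraph : ∀ x < b / a, (x, sin (1 / (a * x - b))) ∈ Γ) :
    {b / a} ×ˢ Icc (-1) 1 ⊆ Γ := by
  rintro ⟨_, y⟩ ⟨rfl, hy⟩
  refine hΓc.mem_of_frequently_of_tendsto ?_
    ((tendsto_id.mono_left (nhdsWithin_le_nhds (s := Iio (b / a)))).prodMk_nhds tendsto_const_nhds)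
  refine ((frequently_sin_one_div_sub_eq ha hy).and_eventually self_mem_nhdsWithin).mono ?_
  rintro x ⟨rfl, hx⟩
  exact hgraph x hx

theorem fderiv_eq_zero_of_graph_sin_subset {a b : ℝ} (ha : 0 < a) {Γ U : Set (ℝ × ℝ)}
    (hΓc : IsClosed Γ) (hgraph : ∀ x < b / a, (x, sin (1 / (a * x - b))) ∈ Γ)
    (hU : U ∈ 𝓝 (b / a, 0)) {f : ℝ × ℝ → ℝ} {f' : ℝ × ℝ →L[ℝ] ℝ}
    (hf : HasFDerivAt f f' (b / a, 0)) (hzero : ∀ q ∈ Γ ∩ U, f q = 0) : f' = 0 := by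
  have hp : (b / a, (0 : ℝ)) ∈ Γ ∩ U :=
    ⟨segment_subset_of_graph_sin_subset ha hΓc hgraph ⟨rfl, by norm_num⟩, mem_of_mem_nhds hU⟩
  have hhorizontal : AccPt (b / a) (𝓟 {x | (x, 0) ∈ Γ ∩ U}) := by
    have hUx : ∀ᶠ x in 𝓝 (b / a), (x, (0 : ℝ)) ∈ U :=
      (continuous_id.prodMk continuous_const).continuousAt.preimage_mem_nhds hU
    rw [accPt_iff_frequently_nhdsNE]
    refine (((frequently_sin_one_div_sub_eq ha (y := 0) (by norm_num)).and_eventually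
      (eventually_mem_nhdsWithin.and (hUx.filter_mono nhdsWithin_le_nhds))).filter_mono
      (nhdsLT_le_nhdsNE _)).mono ?_
    rintro x ⟨hx0, hxlt, hxU⟩
    exact ⟨hx0 ▸ hgraph x hxlt, hxU⟩
  have hvertical : {y | (b / a, y) ∈ Γ ∩ U} ∈ 𝓝 0 := by
    have hUy : ∀ᶠ y in 𝓝 (0 : ℝ), (b / a, y) ∈ U :=
      (continuous_const.prodMk continuous_id).continuousAt.preimage_mem_nhds hU
    filter_upwards [Ioo_mem_nhds (show (-1 : ℝ) < 0 by norm_num) one_pos, hUy] with y hy hyU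
    exact ⟨segment_subset_of_graph_sin_subset ha hΓc hgraph ⟨rfl, Ioo_subset_Icc_self hy⟩, hyU⟩
  exact hf.eq_zero_of_forall_eq
    (uniqueDiffWithinAt_of_slices hhorizontal.uniqueDiffWithinAt
      (uniqueDiffWithinAt_of_mem_nhds hvertical))
    fun q hq => (hzero q hq).trans (hzero _ hp).symm

theorem no_closed_analytic_curve_containing_X (δ : ℝ) (hδ : 0 < δ)
    (X : Set (ℝ × ℝ))
    (hX : X = {p : ℝ × ℝ |
      p.2 = Real.sin (1 / (δ * p.1 - 1 / Real.pi)) ∧ p.1 ≤ 1 / (2 * δ * Real.pi)}) :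
    ¬ ∃ Γ : Set (ℝ × ℝ), IsClosed Γ ∧ X ⊆ Γ ∧
      ∀ p ∈ Γ, ∃ (U : Set (ℝ × ℝ)) (f : ℝ × ℝ → ℝ),
        IsOpen U ∧ p ∈ U ∧ AnalyticOn ℝ f U ∧
        Γ ∩ U = {q ∈ U | f q = 0} ∧
        ∀ q ∈ U, fderiv ℝ f q ≠ 0 := by
  rintro ⟨Γ, hΓc, hXΓ, hloc⟩
  subst hX
  have hΓ : IsLocallyAnalyticZeroSet ℝ Γ := fun p hp =>
    let ⟨U, f, hU, hpU, hf, hΓU, _⟩ := hloc p hp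
    ⟨U, f, hU, hpU, hf, hΓU⟩
  have hγ : AnalyticOnNhd ℝ (fun x => (x, sin (1 / (δ * x - 1 / π)))) (Iio (1 / π / δ)) :=
    fun x hx => analyticAt_id.prod <| analyticAt_sin.comp <| analyticAt_const.div (by fun_prop)
      (by linarith [(lt_div_iff₀ hδ).mp hx])
  have hc : 1 / (2 * δ * π) < 1 / π / δ := by
    rw [div_div, mul_comm π δ]
    exact one_div_lt_one_div_of_lt (by positivity) (by nlinarith [pi_pos])
  have hgraph : ∀ x < 1 / π / δ, (x, sin (1 / (δ * x - 1 / π))) ∈ Γ :=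
    hΓ.mapsTo_of_eventually_mem hΓc isPreconnected_Iio hγ (t₀ := 1 / (2 * δ * π) - 1)
      (mem_Iio.mpr (by linarith)) <| eventually_of_mem (Iio_mem_nhds (sub_one_lt _)) fun x hx =>
        hXΓ ⟨rfl, le_of_lt hx⟩
  have hp : (1 / π / δ, (0 : ℝ)) ∈ Γ :=
    segment_subset_of_graph_sin_subset hδ hΓc hgraph ⟨rfl, by norm_num⟩
  obtain ⟨U, f, hU, hpU, hf, hΓU, hdf⟩ := hloc _ hp
  exact hdf _ hpU <| fderiv_eq_zero_of_graph_sin_subset hδ hΓc hgraph (hU.mem_nhds hpU)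
    (hf.analyticAt (hU.mem_nhds hpU)).differentiableAt.hasFDerivAt fun q hq => (hΓU.subset hq).2
end

section
/- The singular locus claim for X = {z⁴ = x³ + wxz²}: at every point of X of the form (0, w, 0) with w < 0, the set X is not locally a smooth 2-dimensional submanifold of ℝ³; in particular the intersection of X with a small ball around such a point is not a C¹ manifold. (It suffices to show X near (0,w,0), w<0, contains the two transversally intersecting curves {x = z = 0} and {z² = wx + higher order}-branches, e.g. the curves z=0, x=0 and the branch with x = z²·h(z,w) crossing it.) -/
/-!
The surface `z⁴ = x³ + w x z²` contains the `w`-axis and, in each slice `w = const`, the curve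
`m ↦ (m⁴ + w m², m³ + w m)`, which for `w < 0` passes through the origin at `m = ±√(-w)` with the
two independent velocities `(±√(-w), 1)` (up to a factor). Hence the tangent cone of the surface at
`(0, w, 0)` spans `ℝ³`. A local `C¹` chart `F` flattening the surface onto `{z = 0}` makes the third
coordinate of `F` vanish on the surface, so its differential vanishes on that tangent cone and thus
everywhere; but `F` has a differentiable right inverse, so its differential is surjective.
-/

open Set Filter Topology

theorem HasDerivAt.mem_tangentConeAt {E : Type*} [NormedAddCommGroup E] [NormedSpace ℝ E]
    {γ : ℝ → E} {v : E} {t : ℝ} {s : Set E} (hγ : HasDerivAt γ v t)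
    (hs : ∀ᶠ τ in 𝓝 t, γ τ ∈ s) : v ∈ tangentConeAt ℝ s (γ t) := by
  have hmaps := (hγ.hasFDerivAt.hasFDerivWithinAt (s := {τ | γ τ ∈ s})).mapsTo_tangent_cone
  rw [tangentConeAt_of_mem_nhds hs] at hmaps
  simpa using tangentConeAt_mono (image_preimage_subset γ s) (hmaps (mem_univ 1))

theorem HasFDerivAt.eq_zero_of_eqOn_zero {𝕜 E F : Type*} [NontriviallyNormedField 𝕜]
    [NormedAddCommGroup E] [NormedSpace 𝕜 E] [NormedAddCommGroup F] [NormedSpace 𝕜 F]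
    {f : E → F} {f' : E →L[𝕜] F} {s : Set E} {x : E} (hf : HasFDerivAt f f' x)
    (hs : UniqueDiffWithinAt 𝕜 s x) (hx : x ∈ s) (h0 : EqOn f 0 s) : f' = 0 :=
  hs.eq hf.hasFDerivWithinAt ((hasFDerivWithinAt_const 0 x s).congr' h0 hx)

theorem surjective_fderiv_of_eventually_rightInverse {𝕜 E F : Type*} [NontriviallyNormedField 𝕜]
    [NormedAddCommGroup E] [NormedSpace 𝕜 E] [NormedAddCommGroup F] [NormedSpace 𝕜 F]
    {f : E → F} {g : F → E} {x : E} (hf : DifferentiableAt 𝕜 f x)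
    (hg : DifferentiableAt 𝕜 g (f x)) (hgf : g (f x) = x) (hfg : f ∘ g =ᶠ[𝓝 (f x)] id) :
    Function.Surjective (fderiv 𝕜 f x) := by
  intro y
  refine ⟨fderiv 𝕜 g (f x) y, ?_⟩
  have hf' : DifferentiableAt 𝕜 f (g (f x)) := by rwa [hgf]
  have := fderiv_comp (f x) hf' hg
  rw [hfg.fderiv_eq, fderiv_id, hgf] at this
  exact (congrArg (· y) this).symm

def quarticSurface : Set (ℝ × ℝ × ℝ) :=
  {p | p.2.2 ^ 4 = p.1 ^ 3 + p.2.1 * p.1 * p.2.2 ^ 2}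

namespace quarticSurface

/-- The slice `w = const` meets the line `x = m z` outside the origin exactly at this point. -/
def branch (w m : ℝ) : ℝ × ℝ × ℝ :=
  (m ^ 4 + w * m ^ 2, w, m ^ 3 + w * m)

theorem branch_mem (w m : ℝ) : branch w m ∈ quarticSurface := by
  simp only [quarticSurface, branch, mem_ofPred_eq]
  ring

theorem hasDerivAt_branch (w m : ℝ) :
    HasDerivAt (branch w) (4 * m ^ 3 + w * (2 * m), 0, 3 * m ^ 2 + w) m := by
  have h1 := (hasDerivAt_pow 4 m).add ((hasDerivAt_pow 2 m).const_mul w)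
  have h3 := (hasDerivAt_pow 3 m).add ((hasDerivAt_id m).const_mul w)
  simp only [Nat.cast_ofNat] at h1 h3
  convert h1.prodMk ((hasDerivAt_const m w).prodMk h3) using 1
  · funext t; simp [branch]
  · simp

theorem axis_mem_tangentConeAt (w : ℝ) :
    ((0 : ℝ), (1 : ℝ), (0 : ℝ)) ∈ tangentConeAt ℝ quarticSurface (0, w, 0) := by
  have hγ : HasDerivAt (fun t : ℝ => ((0 : ℝ), t, (0 : ℝ))) (0, 1, 0) w :=
    (hasDerivAt_const w 0).prodMk ((hasDerivAt_id w).prodMk (hasDerivAt_const w 0))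
  exact hγ.mem_tangentConeAt (.of_forall fun t => by simp [quarticSurface])

theorem mem_span_tangentConeAt_of_sq_eq_neg {w m : ℝ} (hw : w ≠ 0)
    (hm : m ^ 2 = -w) :
    ((m, 0, 1) : ℝ × ℝ × ℝ) ∈ Submodule.span ℝ (tangentConeAt ℝ quarticSurface (0, w, 0)) := by
  have hbase : branch w m = (0, w, 0) := by
    rw [branch, Prod.mk.injEq, Prod.mk.injEq]
    exact ⟨by linear_combination m ^ 2 * hm, rfl, by linear_combination m * hm⟩
  have hvel : ((4 * m ^ 3 + w * (2 * m), 0, 3 * m ^ 2 + w) : ℝ × ℝ × ℝ) =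
      (-2 * w) • (m, 0, 1) := by
    simp only [Prod.smul_mk, smul_eq_mul, mul_zero, mul_one, Prod.mk.injEq, true_and]
    exact ⟨by linear_combination 4 * m * hm, by linear_combination 3 * hm⟩
  have hmem := (hasDerivAt_branch w m).mem_tangentConeAt (.of_forall (branch_mem w))
  rw [hbase, hvel] at hmem
  exact (Submodule.smul_mem_iff _ (by simpa using hw)).mp (Submodule.subset_span hmem)

theorem uniqueDiffWithinAt {w : ℝ} (hw : w < 0) :
    UniqueDiffWithinAt ℝ quarticSurface (0, w, 0) := by
  refine ⟨?_, subset_closure (by simp [quarticSurface])⟩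
  suffices Submodule.span ℝ (tangentConeAt ℝ quarticSurface (0, w, 0)) = ⊤ by
    rw [this, Submodule.top_coe]
    exact dense_univ
  set r := Real.sqrt (-w)
  have hr : r ^ 2 = -w := Real.sq_sqrt (by linarith)
  have hr0 : r ≠ 0 := (Real.sqrt_pos.mpr (by linarith)).ne'
  have hplus := mem_span_tangentConeAt_of_sq_eq_neg hw.ne hr
  have hminus := mem_span_tangentConeAt_of_sq_eq_neg (m := -r) hw.ne (by rw [neg_sq, hr])
  have haxis := Submodule.subset_span (R := ℝ) (axis_mem_tangentConeAt w)
  rw [Submodule.eq_top_iff']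
  rintro ⟨a, b, c⟩
  have hcomb : ((a, b, c) : ℝ × ℝ × ℝ) =
      ((c + a / r) / 2) • (r, 0, 1) + b • (0, 1, 0) + ((c - a / r) / 2) • (-r, 0, 1) := by
    simp only [Prod.smul_mk, smul_eq_mul, Prod.mk_add_mk, Prod.mk.injEq]
    refine ⟨by field_simp; ring, by ring, by ring⟩
  rw [hcomb]
  exact add_mem (add_mem (Submodule.smul_mem _ _ hplus) (Submodule.smul_mem _ _ haxis))
    (Submodule.smul_mem _ _ hminus)

end quarticSurface

theorem X_not_locally_manifold_on_negative_w_axis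
    (X : Set (ℝ × ℝ × ℝ))
    (hX : X = {p : ℝ × ℝ × ℝ | p.2.2 ^ 4 = p.1 ^ 3 + p.2.1 * p.1 * p.2.2 ^ 2})
    (w : ℝ) (hw : w < 0) :
    ¬ ∃ (U V : Set (ℝ × ℝ × ℝ)) (F G : ℝ × ℝ × ℝ → ℝ × ℝ × ℝ),
      IsOpen U ∧ IsOpen V ∧ (0, w, 0) ∈ U ∧
      ContDiffOn ℝ 1 F U ∧ ContDiffOn ℝ 1 G V ∧
      F '' U = V ∧ (∀ p ∈ U, G (F p) = p) ∧ (∀ p ∈ V, F (G p) = p) ∧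
      F '' (X ∩ U) = {p ∈ V | p.2.2 = 0} := by
  rintro ⟨U, V, F, G, hU, hV, hp₀U, hF, hG, hFUV, hGF, hFG, hFX⟩
  have hXq : X = quarticSurface := hX
  subst hXq
  set p₀ : ℝ × ℝ × ℝ := (0, w, 0)
  have hFp₀ : F p₀ ∈ V := hFUV ▸ mem_image_of_mem F hp₀U
  have hFd : DifferentiableAt ℝ F p₀ :=
    (hF.contDiffAt (hU.mem_nhds hp₀U)).differentiableAt one_ne_zero
  have hGd : DifferentiableAt ℝ G (F p₀) :=
    (hG.contDiffAt (hV.mem_nhds hFp₀)).differentiableAt one_ne_zero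
  have hsurj : Function.Surjective (fderiv ℝ F p₀) :=
    surjective_fderiv_of_eventually_rightInverse hFd hGd (hGF p₀ hp₀U)
      (eventually_of_mem (hV.mem_nhds hFp₀) hFG)
  let π₃ : ℝ × ℝ × ℝ →L[ℝ] ℝ := (ContinuousLinearMap.snd ℝ ℝ ℝ).comp (.snd ℝ ℝ (ℝ × ℝ))
  have hvanish : EqOn (π₃ ∘ F) 0 (quarticSurface ∩ U) := fun p hp =>
    (hFX.subset (mem_image_of_mem F hp)).2
  have hzero : π₃.comp (fderiv ℝ F p₀) = 0 :=
    (π₃.hasFDerivAt.comp p₀ hFd.hasFDerivAt).eq_zero_of_eqOn_zero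
      ((quarticSurface.uniqueDiffWithinAt hw).inter (hU.mem_nhds hp₀U))
      ⟨by simp [p₀, quarticSurface], hp₀U⟩ hvanish
  obtain ⟨v, hv⟩ := hsurj (0, 0, 1)
  simpa [π₃, hv] using congrArg (· v) hzero
end
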